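/- For every real ν with ν > −1 and every real u with 0 < u < 1/(1−q), the first q-Bessel function satisfies ∂^q_u ( u^{−ν} J^{(1)}_ν(u|q²) ) = − u · u^{−(ν+1)} J^{(1)}_{ν+1}(u|q²). -/

import Mathlib

open scoped BigOperators

noncomputable section

/-- The q-number `[u]_q = (q^u - 1)/(q - 1)`. -/
def qNum (q u : ℝ) : ℝ := (q ^ u - 1) / (q - 1)

/-- The q-factorial `[n]_q! = ∏_{i=1}^n [i]_q`. -/
def qFact (q : ℝ) (n : ℕ) : ℝ := ∏ i ∈ Finset.range n, qNum q ((i : ℝ) + 1)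

/-- The q-Gamma function `Γ_q(t) = (1-q)^{1-t} ∏_{k=0}^∞ (1-q^{k+1})/(1-q^{k+t})`. -/
def qGamma (q t : ℝ) : ℝ :=
  (1 - q) ^ (1 - t) * ∏' k : ℕ, (1 - q ^ (k + 1)) / (1 - q ^ ((k : ℝ) + t))

/-- The q-derivative `∂^q_t f(t) = (f(qt) - f(t))/((q-1)t)`.
The `q⁻¹`-derivative is `qDeriv q⁻¹`. -/
def qDeriv (q : ℝ) (f : ℝ → ℝ) (t : ℝ) : ℝ := (f (q * t) - f t) / ((q - 1) * t)

/-- The q-Pochhammer symbol `(a; q)_k = ∏_{l=0}^{k-1} (1 - a q^l)`. -/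
def qPoch (a q : ℝ) (k : ℕ) : ℝ := ∏ l ∈ Finset.range k, (1 - a * q ^ l)

/-- The q-exponential `E_q(t) = ∑_{j=0}^∞ q^{j(j-1)/2} t^j/[j]_q!`. -/
def qExpE (q t : ℝ) : ℝ := ∑' j : ℕ, q ^ (j * (j - 1) / 2) * t ^ j / qFact q j

/-- `e_q(-u) := 1/E_q(u)` (intended for `u ≥ 0`); `qExpe q u` denotes `e_q(-u)`. -/
def qExpe (q u : ℝ) : ℝ := (qExpE q u)⁻¹

/-- The first q-Bessel function `J^{(1)}_ν(x|q²)`. -/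
def qBessel1 (q ν x : ℝ) : ℝ :=
  (x / (1 + q)) ^ ν *
    ∑' i : ℕ, (-1 : ℝ) ^ i / (qFact (q ^ 2) i * qGamma (q ^ 2) ((i : ℝ) + ν + 1)) *
      (x / (1 + q)) ^ (2 * i)

/-- The second q-Bessel function `J^{(2)}_ν(x|q²)`. -/
def qBessel2 (q ν x : ℝ) : ℝ :=
  q ^ (ν ^ 2) * (x / (1 + q)) ^ ν *
    ∑' i : ℕ, q ^ (2 * (i : ℝ) * ((i : ℝ) + ν)) * (-1 : ℝ) ^ i /
        (qFact (q ^ 2) i * qGamma (q ^ 2) ((i : ℝ) + ν + 1)) *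
      (x / (1 + q)) ^ (2 * i)

/-- The q-Laguerre polynomial `𝓛^{(α)}_j(u|q²)`. -/
def qLaguerre (q α : ℝ) (j : ℕ) (u : ℝ) : ℝ :=
  ∑ i ∈ Finset.range (j + 1),
    q ^ ((j - i) * (j - i + 1)) * (-u) ^ i / (qFact (q ^ 2) (j - i) * qFact (q ^ 2) i) *
      (qPoch (q ^ (2 * (i : ℝ) + 2 * α + 2)) (q ^ 2) (j - i) / (1 - q ^ 2) ^ (j - i))

/-- The q-Laguerre polynomial `𝓛^{(α)}_j(u|q^{-2})`. -/
def qLaguerreInv (q α : ℝ) (j : ℕ) (u : ℝ) : ℝ :=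
  q ^ (-(j : ℝ) * ((j : ℝ) + 1 + 2 * α)) *
    ∑ i ∈ Finset.range (j + 1),
      q ^ (2 * (i : ℝ) * ((i : ℝ) + α)) * (-u) ^ i / (qFact (q ^ 2) (j - i) * qFact (q ^ 2) i) *
        (qPoch (q ^ (2 * (i : ℝ) + 2 * α + 2)) (q ^ 2) (j - i) / (1 - q ^ 2) ^ (j - i))

/-- The finite Jackson q-integral `∫_0^a f(t) d_q t = (1-q) a ∑_{k=0}^∞ f(q^k a) q^k`. -/
def jackson (q a : ℝ) (f : ℝ → ℝ) : ℝ := (1 - q) * a * ∑' k : ℕ, f (q ^ k * a) * q ^ k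

/-- The infinite Jackson q-integral `∫_0^{γ·∞} f(t) d_q t = (1-q) γ ∑_{k=-∞}^∞ f(q^k γ) q^k`. -/
def jacksonInf (q γ : ℝ) (f : ℝ → ℝ) : ℝ := (1 - q) * γ * ∑' k : ℤ, f (q ^ k * γ) * q ^ k

/-- The first q-Hankel transform `𝓗̄^{q,β}_ν`. -/
def hankel1 (q μ ν β : ℝ) (f : ℝ → ℝ) (t : ℝ) : ℝ :=
  (1 + q) / μ * jackson q (Real.sqrt (μ / ((1 - q ^ 2) * β)))
    (fun r => qBessel1 q ν ((1 + q) / μ * (r * t)) / (r * t) ^ ν * r ^ (2 * ν + 1) * f r)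

/-- The second q-Hankel transform `𝓗^{q,γ}_ν`. -/
def hankel2 (q μ ν γ : ℝ) (f : ℝ → ℝ) (r : ℝ) : ℝ :=
  (1 + q) / μ * jacksonInf q γ
    (fun t => qBessel2 q ν (q * ((1 + q) / μ) * (r * t)) / (r * t) ^ ν * t ^ (2 * ν + 1) * f t)

/-!
Dividing by `u^ν` leaves `(1+q)^{-ν} G_ν(z)`, where `G_ν(z) = ∑ cᵢ(ν) zⁱ` is a power series in
`z = (u/(1+q))²`, so the `q`-derivative in `u` becomes a `q²`-difference in `z`. That difference
acts termwise, `cᵢ (Qⁱ - 1) = (Q - 1) [i]_Q cᵢ`, and `[i+1]_{q²}! = [i]_{q²}! [i+1]_{q²}` gives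
`[i+1]_{q²} c_{i+1}(ν) = -cᵢ(ν+1)`. The series converge for `(1-q) u < 1` because `[n]_Q! (1-Q)ⁿ`
and `Γ_Q(t) (1-Q)^{t-1}` are both bounded below by `(Q;Q)_∞ > 0`, so `cᵢ(ν) = O((1-Q)^{2i})`.
-/

open Real

def qPochInf (a Q : ℝ) : ℝ := ∏' k : ℕ, (1 - a * Q ^ k)

def qBesselCoeff (Q ν : ℝ) (i : ℕ) : ℝ :=
  (-1) ^ i / (qFact Q i * qGamma Q ((i : ℝ) + ν + 1))

/-- `J^{(1)}_ν(x|q²) = (x/(1+q))^ν · qBesselSeries (q²) ν ((x/(1+q))²)`. -/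
def qBesselSeries (Q ν z : ℝ) : ℝ := ∑' i : ℕ, qBesselCoeff Q ν i * z ^ i

section qPochInf

variable {a Q : ℝ}

lemma summable_log_one_sub_mul_pow (hQ0 : 0 ≤ Q) (hQ1 : Q < 1) :
    Summable fun k : ℕ => log (1 - a * Q ^ k) := by
  simpa only [sub_eq_add_neg] using
    Real.summable_log_one_add_of_summable ((summable_geometric_of_lt_one hQ0 hQ1).mul_left a).neg

lemma multipliable_one_sub_mul_pow (hQ0 : 0 ≤ Q) (hQ1 : Q < 1) :
    Multipliable fun k : ℕ => 1 - a * Q ^ k := by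
  simpa only [sub_eq_add_neg] using
    Real.multipliable_one_add_of_summable ((summable_geometric_of_lt_one hQ0 hQ1).mul_left a).neg

lemma one_sub_mul_pow_pos (hQ0 : 0 ≤ Q) (hQ1 : Q < 1) (ha0 : 0 ≤ a) (ha1 : a < 1) (k : ℕ) :
    0 < 1 - a * Q ^ k := by
  have : a * Q ^ k ≤ a := mul_le_of_le_one_right ha0 (pow_le_one₀ hQ0 hQ1.le)
  linarith

lemma qPochInf_pos (hQ0 : 0 ≤ Q) (hQ1 : Q < 1) (ha0 : 0 ≤ a) (ha1 : a < 1) :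
    0 < qPochInf a Q := by
  rw [qPochInf, ← Real.rexp_tsum_eq_tprod (one_sub_mul_pow_pos hQ0 hQ1 ha0 ha1)
    (summable_log_one_sub_mul_pow hQ0 hQ1)]
  exact exp_pos _

lemma qPochInf_le_one (hQ0 : 0 ≤ Q) (hQ1 : Q < 1) (ha0 : 0 ≤ a) (ha1 : a < 1) :
    qPochInf a Q ≤ 1 :=
  (multipliable_one_sub_mul_pow hQ0 hQ1).tprod_le_of_prod_range_le fun _ =>
    Finset.prod_le_one (fun k _ => (one_sub_mul_pow_pos hQ0 hQ1 ha0 ha1 k).le)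
      (fun k _ => sub_le_self 1 (mul_nonneg ha0 (pow_nonneg hQ0 k)))

lemma qPochInf_le_prod_range (hQ0 : 0 ≤ Q) (hQ1 : Q < 1) (ha0 : 0 ≤ a) (ha1 : a < 1) (n : ℕ) :
    qPochInf a Q ≤ ∏ k ∈ Finset.range n, (1 - a * Q ^ k) := by
  refine Antitone.le_of_tendsto (antitone_nat_of_succ_le fun m => ?_)
    (multipliable_one_sub_mul_pow hQ0 hQ1).hasProd.tendsto_prod_nat n
  rw [Finset.prod_range_succ]
  refine mul_le_of_le_one_right (Finset.prod_nonneg fun k _ => ?_) ?_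
  · exact (one_sub_mul_pow_pos hQ0 hQ1 ha0 ha1 k).le
  · exact sub_le_self 1 (mul_nonneg ha0 (pow_nonneg hQ0 m))

end qPochInf

section qFactGamma

variable {Q : ℝ}

lemma qNum_natCast (n : ℕ) : qNum Q n = (Q ^ n - 1) / (Q - 1) := by
  rw [qNum, rpow_natCast]

lemma qFact_succ (n : ℕ) :
    qFact Q (n + 1) = qFact Q n * qNum Q ((n + 1 : ℕ) : ℝ) := by
  rw [qFact, Finset.prod_range_succ, Nat.cast_succ]
  rfl

lemma qFact_pos (hQ0 : 0 ≤ Q) (hQ1 : Q < 1) (n : ℕ) : 0 < qFact Q n :=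
  Finset.prod_pos fun i _ =>
    div_pos_of_neg_of_neg (by linarith [rpow_lt_one hQ0 hQ1 (by positivity : (0 : ℝ) < i + 1)])
      (by linarith)

lemma qFact_mul_pow (hQ : Q ≠ 1) (n : ℕ) :
    qFact Q n * (1 - Q) ^ n = ∏ k ∈ Finset.range n, (1 - Q * Q ^ k) := by
  induction n with
  | zero => simp [qFact]
  | succ n ih =>
    rw [qFact_succ, Finset.prod_range_succ, ← ih, qNum_natCast, pow_succ, pow_succ]
    have : Q - 1 ≠ 0 := sub_ne_zero.mpr hQ
    field_simp
    ring

lemma qPochInf_le_qFact_mul_pow (hQ0 : 0 ≤ Q) (hQ1 : Q < 1) (n : ℕ) :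
    qPochInf Q Q ≤ qFact Q n * (1 - Q) ^ n := by
  rw [qFact_mul_pow hQ1.ne]
  exact qPochInf_le_prod_range hQ0 hQ1 hQ0 hQ1 n

lemma qGamma_eq_qPochInf_div (hQ0 : 0 < Q) (hQ1 : Q < 1) {t : ℝ} (ht : 0 < t) :
    qGamma Q t = (1 - Q) ^ (1 - t) * (qPochInf Q Q / qPochInf (Q ^ t) Q) := by
  have hfactor : ∀ k : ℕ, (1 - Q ^ (k + 1)) / (1 - Q ^ ((k : ℝ) + t)) =
      (1 - Q * Q ^ k) / (1 - Q ^ t * Q ^ k) := fun k => by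
    rw [pow_succ', rpow_add hQ0, rpow_natCast, mul_comm (Q ^ k)]
  rw [qGamma, qPochInf, qPochInf,
    ← Multipliable.tprod_div₀ (multipliable_one_sub_mul_pow hQ0.le hQ1)
      (multipliable_one_sub_mul_pow hQ0.le hQ1)
      (qPochInf_pos hQ0.le hQ1 (rpow_nonneg hQ0.le t) (rpow_lt_one hQ0.le hQ1 ht)).ne']
  simp only [hfactor]

lemma qPochInf_le_qGamma_mul_rpow (hQ0 : 0 < Q) (hQ1 : Q < 1) {t : ℝ} (ht : 0 < t) :
    qPochInf Q Q ≤ qGamma Q t * (1 - Q) ^ (t - 1) := by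
  have hQt0 : 0 ≤ Q ^ t := rpow_nonneg hQ0.le t
  have hQt1 : Q ^ t < 1 := rpow_lt_one hQ0.le hQ1 ht
  have hcancel : (1 - Q) ^ (1 - t) * (1 - Q) ^ (t - 1) = 1 := by
    rw [← rpow_add (by linarith), show 1 - t + (t - 1) = 0 by ring, rpow_zero]
  calc qPochInf Q Q ≤ qPochInf Q Q / qPochInf (Q ^ t) Q :=
        le_div_self (qPochInf_pos hQ0.le hQ1 hQ0.le hQ1).le (qPochInf_pos hQ0.le hQ1 hQt0 hQt1)
          (qPochInf_le_one hQ0.le hQ1 hQt0 hQt1)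
    _ = qGamma Q t * (1 - Q) ^ (t - 1) := by
        rw [qGamma_eq_qPochInf_div hQ0 hQ1 ht, mul_right_comm, hcancel, one_mul]

lemma qGamma_pos (hQ0 : 0 < Q) (hQ1 : Q < 1) {t : ℝ} (ht : 0 < t) : 0 < qGamma Q t :=
  pos_of_mul_pos_left ((qPochInf_pos hQ0.le hQ1 hQ0.le hQ1).trans_le
    (qPochInf_le_qGamma_mul_rpow hQ0 hQ1 ht)) (rpow_nonneg (by linarith) _)

end qFactGamma

lemma tsum_mul_pow_sub_tsum_mul_pow {c : ℕ → ℝ} {Q z : ℝ} (hQ : Q ≠ 1)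
    (hQz : Summable fun i => c i * (Q * z) ^ i) (hz : Summable fun i => c i * z ^ i) :
    ∑' i, c i * (Q * z) ^ i - ∑' i, c i * z ^ i =
      (Q - 1) * z * ∑' i, qNum Q ((i + 1 : ℕ) : ℝ) * c (i + 1) * z ^ i := by
  rw [← hQz.tsum_sub hz, (hQz.sub hz).tsum_eq_zero_add, ← tsum_mul_left]
  simp only [pow_zero, sub_self, zero_add]
  congr 1 with i
  have : Q - 1 ≠ 0 := sub_ne_zero.mpr hQ
  rw [qNum_natCast]
  field_simp
  ring

section qBessel

variable {Q ν : ℝ}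

lemma inv_qFact_mul_qGamma_le (hQ0 : 0 < Q) (hQ1 : Q < 1) (hν : -1 < ν) (i : ℕ) :
    (qFact Q i * qGamma Q ((i : ℝ) + ν + 1))⁻¹ ≤
      (1 - Q) ^ ν / qPochInf Q Q ^ 2 * ((1 - Q) ^ 2) ^ i := by
  have h1Q : 0 < 1 - Q := by linarith
  have ht : 0 < (i : ℝ) + ν + 1 := by linarith [i.cast_nonneg (α := ℝ)]
  have hP := qPochInf_pos hQ0.le hQ1 hQ0.le hQ1
  have hF := qPochInf_le_qFact_mul_pow hQ0.le hQ1 i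
  have hG := qPochInf_le_qGamma_mul_rpow hQ0 hQ1 ht
  have hpow : (1 - Q) ^ ((i : ℝ) + ν + 1 - 1) = (1 - Q) ^ i * (1 - Q) ^ ν := by
    rw [add_sub_cancel_right, rpow_add h1Q, rpow_natCast]
  rw [hpow] at hG
  have hFG : 0 < qFact Q i * qGamma Q ((i : ℝ) + ν + 1) :=
    mul_pos (qFact_pos hQ0.le hQ1 i) (qGamma_pos hQ0 hQ1 ht)
  rw [inv_le_iff_one_le_mul₀ hFG, div_mul_eq_mul_div, div_mul_eq_mul_div,
    one_le_div (by positivity)]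
  calc qPochInf Q Q ^ 2 = qPochInf Q Q * qPochInf Q Q := by ring
    _ ≤ (qFact Q i * (1 - Q) ^ i) *
          (qGamma Q ((i : ℝ) + ν + 1) * ((1 - Q) ^ i * (1 - Q) ^ ν)) :=
        mul_le_mul hF hG hP.le (hP.le.trans hF)
    _ = _ := by rw [← pow_mul, two_mul, pow_add]; ring

lemma summable_qBesselCoeff_mul_pow (hQ0 : 0 < Q) (hQ1 : Q < 1) (hν : -1 < ν) {z : ℝ}
    (hz : (1 - Q) ^ 2 * |z| < 1) : Summable fun i => qBesselCoeff Q ν i * z ^ i := by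
  refine Summable.of_norm_bounded
    ((summable_geometric_of_lt_one (by positivity) hz).mul_left
      ((1 - Q) ^ ν / qPochInf Q Q ^ 2)) fun i => ?_
  have ht : 0 < (i : ℝ) + ν + 1 := by linarith [i.cast_nonneg (α := ℝ)]
  have hFG : 0 < qFact Q i * qGamma Q ((i : ℝ) + ν + 1) :=
    mul_pos (qFact_pos hQ0.le hQ1 i) (qGamma_pos hQ0 hQ1 ht)
  rw [qBesselCoeff, norm_mul, norm_div, norm_pow, norm_pow, norm_neg, norm_one, one_pow,
    Real.norm_of_nonneg hFG.le, Real.norm_eq_abs, one_div, mul_pow, ← mul_assoc]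
  exact mul_le_mul_of_nonneg_right (inv_qFact_mul_qGamma_le hQ0 hQ1 hν i) (by positivity)

lemma qNum_mul_qBesselCoeff_succ (hQ0 : 0 < Q) (hQ1 : Q ≠ 1) (i : ℕ) :
    qNum Q ((i + 1 : ℕ) : ℝ) * qBesselCoeff Q ν (i + 1) = -qBesselCoeff Q (ν + 1) i := by
  have hnum : qNum Q ((i + 1 : ℕ) : ℝ) ≠ 0 := by
    rw [qNum_natCast]
    have hpow : Q ^ (i + 1) ≠ 1 := (pow_eq_one_iff_of_nonneg hQ0.le i.succ_ne_zero).not.mpr hQ1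
    exact div_ne_zero (sub_ne_zero.mpr hpow) (sub_ne_zero.mpr hQ1)
  rw [qBesselCoeff, qBesselCoeff, qFact_succ, pow_succ, show ((i + 1 : ℕ) : ℝ) + ν + 1 =
    (i : ℝ) + (ν + 1) + 1 by push_cast; ring]
  field_simp

lemma qBesselSeries_mul_sub (hQ0 : 0 < Q) (hQ1 : Q < 1) (hν : -1 < ν) {z : ℝ}
    (hz : (1 - Q) ^ 2 * |z| < 1) :
    qBesselSeries Q ν (Q * z) - qBesselSeries Q ν z =
      (1 - Q) * z * qBesselSeries Q (ν + 1) z := by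
  have hQz : (1 - Q) ^ 2 * |Q * z| < 1 := by
    rw [abs_mul, abs_of_pos hQ0]
    refine lt_of_le_of_lt (mul_le_mul_of_nonneg_left ?_ (sq_nonneg _)) hz
    exact mul_le_of_le_one_left (abs_nonneg z) hQ1.le
  rw [qBesselSeries, qBesselSeries, tsum_mul_pow_sub_tsum_mul_pow hQ1.ne
    (summable_qBesselCoeff_mul_pow hQ0 hQ1 hν hQz) (summable_qBesselCoeff_mul_pow hQ0 hQ1 hν hz)]
  simp only [qNum_mul_qBesselCoeff_succ hQ0 hQ1.ne, qBesselSeries, neg_mul, tsum_neg]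
  ring

end qBessel

lemma rpow_neg_mul_qBessel1 {q : ℝ} (hq : 0 ≤ 1 + q) (ν : ℝ) {s : ℝ} (hs : 0 < s) :
    s ^ (-ν) * qBessel1 q ν s =
      ((1 + q) ^ ν)⁻¹ * qBesselSeries (q ^ 2) ν ((s / (1 + q)) ^ 2) := by
  simp only [qBessel1, qBesselSeries, qBesselCoeff, pow_mul]
  rw [div_rpow hs.le hq, rpow_neg hs.le, div_eq_mul_inv (s ^ ν), ← mul_assoc, ← mul_assoc,
    inv_mul_cancel₀ (rpow_pos_of_pos hs ν).ne', one_mul]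

/-- `∂^q_u (u^{-ν} J^{(1)}_ν(u|q²)) = -u · u^{-(ν+1)} J^{(1)}_{ν+1}(u|q²)`
for `ν > -1` and `0 < u < 1/(1-q)`. -/
theorem qBessel1_qDeriv_div (q : ℝ) (hq0 : 0 < q) (hq1 : q < 1)
    (ν : ℝ) (hν : ν > -1) (u : ℝ) (hu0 : 0 < u) (hu1 : u < 1 / (1 - q)) :
    qDeriv q (fun s => s ^ (-ν) * qBessel1 q ν s) u =
      -u * (u ^ (-(ν + 1)) * qBessel1 q (ν + 1) u) := by
  have hq : 0 < 1 + q := by linarith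
  have hz : (1 - q ^ 2) ^ 2 * |(u / (1 + q)) ^ 2| < 1 := by
    have hu : (1 - q) * u < 1 := by rwa [lt_div_iff₀ (by linarith), mul_comm] at hu1
    rw [abs_of_nonneg (sq_nonneg _), ← mul_pow,
      show (1 - q ^ 2) * (u / (1 + q)) = (1 - q) * u by field_simp; ring]
    exact pow_lt_one₀ (mul_pos (by linarith) hu0).le hu two_ne_zero
  simp only [qDeriv]
  rw [rpow_neg_mul_qBessel1 hq.le ν (mul_pos hq0 hu0), rpow_neg_mul_qBessel1 hq.le ν hu0,
    rpow_neg_mul_qBessel1 hq.le (ν + 1) hu0,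
    show (q * u / (1 + q)) ^ 2 = q ^ 2 * (u / (1 + q)) ^ 2 by ring, ← mul_sub,
    qBesselSeries_mul_sub (by positivity) (pow_lt_one₀ hq0.le hq1 two_ne_zero) hν hz,
    rpow_add_one hq.ne']
  have : q - 1 ≠ 0 := by linarith
  field_simp
  ring
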